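/- Let Q ∈ ℝ^{(n+m)×(n+m)} and w^k ∈ ℝⁿ⁺ᵐ. Suppose w* = (x*, λ*) ∈ Ω is a VI solution and w̃ = (x̃, λ̃) ∈ Ω satisfies the prediction VI at w^k with matrix Q. Then (w^k − w*)ᵀQ(w^k − w̃) ≥ (w^k − w̃)ᵀQ(w^k − w̃). -/
import Mathlib


open Matrix

/-- The continuous linear functional `u ↦ v ⬝ᵥ u` on `ℝⁿ`, used to express
that `v` is the gradient of a scalar function. -/
noncomputable def dotCLM {n : ℕ} (v : Fin n → ℝ) : (Fin n → ℝ) →L[ℝ] ℝ :=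
  LinearMap.toContinuousLinearMap (∑ j, v j • LinearMap.proj j)

/-- The `x`-part of `w = (x, λ) ∈ ℝⁿ⁺ᵐ`. -/
def xpart {n m : ℕ} (w : Fin n ⊕ Fin m → ℝ) : Fin n → ℝ := fun i => w (Sum.inl i)

/-- The `λ`-part of `w = (x, λ) ∈ ℝⁿ⁺ᵐ`. -/
def lpart {n m : ℕ} (w : Fin n ⊕ Fin m → ℝ) : Fin m → ℝ := fun j => w (Sum.inr j)

/-- `Ω = X × ℝ₊ᵐ` viewed inside `ℝⁿ⁺ᵐ`. -/
def OmegaSet {n m : ℕ} (X : Set (Fin n → ℝ)) : Set (Fin n ⊕ Fin m → ℝ) :=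
  {w | xpart w ∈ X ∧ ∀ j, 0 ≤ lpart w j}

/-- `Γ(w) = (DΦ(x)ᵀλ, −Φ(x))` for `w = (x, λ)`, where row `i` of the Jacobian `DΦ`
is the gradient `φ' i`. -/
noncomputable def Gam {n m : ℕ} (φ : Fin m → (Fin n → ℝ) → ℝ)
    (φ' : Fin m → (Fin n → ℝ) → (Fin n → ℝ)) (w : Fin n ⊕ Fin m → ℝ) :
    Fin n ⊕ Fin m → ℝ :=
  Sum.elim (∑ i, lpart w i • φ' i (xpart w)) (fun i => -(φ i (xpart w)))

lemma dotCLM_apply {n : ℕ} (v u : Fin n → ℝ) : dotCLM v u = v ⬝ᵥ u := by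
  simp [dotCLM, dotProduct, LinearMap.sum_apply, smul_eq_mul]

lemma grad_ineq {n : ℕ} {φ : (Fin n → ℝ) → ℝ} (hφ : ConvexOn ℝ Set.univ φ)
    {g x y : Fin n → ℝ} (h : HasFDerivAt φ (dotCLM g) x) :
    φ x + g ⬝ᵥ (y - x) ≤ φ y := by
  set L : ℝ →ᵃ[ℝ] (Fin n → ℝ) := AffineMap.lineMap x y with hL
  have hcomp : ConvexOn ℝ Set.univ (φ ∘ L) := by
    have := hφ.comp_affineMap L
    simpa using this
  have hline : HasDerivAt (fun t : ℝ => L t) (y - x) 0 := by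
    simp only [hL, AffineMap.lineMap_apply]
    simpa using ((hasDerivAt_id (0:ℝ)).smul_const (y - x)).add_const x
  have hc : HasDerivAt (φ ∘ L) (dotCLM g (y - x)) 0 := by
    have hx0 : L 0 = x := by simp [hL]
    exact (hx0 ▸ h).comp_hasDerivAt 0 hline
  have := hcomp.le_slope_of_hasDerivAt (S := Set.univ) (Set.mem_univ (0:ℝ))
    (Set.mem_univ (1:ℝ)) one_pos hc
  have hslope : slope (φ ∘ L) 0 1 = φ y - φ x := by
    simp [slope, hL, AffineMap.lineMap_apply]
  rw [hslope] at this
  rw [dotCLM_apply] at this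
  linarith

lemma dot_split {n m : ℕ} (u v : Fin n ⊕ Fin m → ℝ) :
    u ⬝ᵥ v = xpart u ⬝ᵥ xpart v + lpart u ⬝ᵥ lpart v := by
  simp [dotProduct, Fintype.sum_sum_type, xpart, lpart]

lemma Gam_mono {n m : ℕ} (φ : Fin m → (Fin n → ℝ) → ℝ) (hφ : ∀ i, ConvexOn ℝ Set.univ (φ i))
    (φ' : Fin m → (Fin n → ℝ) → (Fin n → ℝ))
    (hφ' : ∀ i x, HasFDerivAt (φ i) (dotCLM (φ' i x)) x)
    (u v : Fin n ⊕ Fin m → ℝ) (hu : ∀ j, 0 ≤ lpart u j) (hv : ∀ j, 0 ≤ lpart v j) :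
    0 ≤ (u - v) ⬝ᵥ (Gam φ φ' u - Gam φ φ' v) := by
  set x1 := xpart u; set x2 := xpart v
  set l1 := lpart u; set l2 := lpart v
  have hx : xpart (u - v) = x1 - x2 := rfl
  have hl : lpart (u - v) = l1 - l2 := rfl
  have hGx : xpart (Gam φ φ' u - Gam φ φ' v)
      = (∑ i, l1 i • φ' i x1) - (∑ i, l2 i • φ' i x2) := rfl
  have hGl : lpart (Gam φ φ' u - Gam φ φ' v)
      = fun i => -(φ i x1) - -(φ i x2) := rfl
  rw [dot_split, hx, hl, hGx, hGl]
  have e1 : (x1 - x2) ⬝ᵥ ((∑ i, l1 i • φ' i x1) - (∑ i, l2 i • φ' i x2))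
      = ∑ i, (l1 i * ((x1 - x2) ⬝ᵥ φ' i x1) - l2 i * ((x1 - x2) ⬝ᵥ φ' i x2)) := by
    simp only [dotProduct_sub, dotProduct, Finset.sum_apply, Pi.sub_apply, Pi.smul_apply,
      smul_eq_mul, Finset.mul_sum, ← Finset.sum_sub_distrib]
    rw [Finset.sum_comm]
    exact Finset.sum_congr rfl fun i _ => Finset.sum_congr rfl fun j _ => by ring
  have e2 : (l1 - l2) ⬝ᵥ (fun i => -(φ i x1) - -(φ i x2))
      = ∑ i, (l1 i - l2 i) * (φ i x2 - φ i x1) := by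
    simp [dotProduct]; congr 1; ext i; ring
  rw [e1, e2, ← Finset.sum_add_distrib]
  apply Finset.sum_nonneg
  intro i _
  have g1 : φ i x1 + φ' i x1 ⬝ᵥ (x2 - x1) ≤ φ i x2 := grad_ineq (hφ i) (hφ' i x1)
  have g2 : φ i x2 + φ' i x2 ⬝ᵥ (x1 - x2) ≤ φ i x1 := grad_ineq (hφ i) (hφ' i x2)
  have c1 : (x1 - x2) ⬝ᵥ φ' i x1 = -(φ' i x1 ⬝ᵥ (x2 - x1)) := by
    rw [dotProduct_comm]; rw [show x1 - x2 = -(x2 - x1) by ring, dotProduct_neg]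
  have c2 : (x1 - x2) ⬝ᵥ φ' i x2 = φ' i x2 ⬝ᵥ (x1 - x2) := dotProduct_comm _ _
  rw [c1, c2]
  nlinarith [hu i, hv i, mul_nonneg (hu i) (sub_nonneg.2 g1), mul_nonneg (hv i) (sub_nonneg.2 g2)]

/-- Inequality (92): if `w*` solves the VI and `w̃` satisfies the prediction VI at
`wᵏ` with matrix `Q`, then `(wᵏ − w*)ᵀQ(wᵏ − w̃) ≥ (wᵏ − w̃)ᵀQ(wᵏ − w̃)`. -/
theorem stmt16 {n m : ℕ}
    (hn : 0 < n) (hm : 0 < m)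
    (X : Set (Fin n → ℝ)) (hXne : X.Nonempty) (hXcl : IsClosed X) (hXcvx : Convex ℝ X)
    (f : (Fin n → ℝ) → ℝ) (hf : ConvexOn ℝ Set.univ f)
    (φ : Fin m → (Fin n → ℝ) → ℝ) (hφ : ∀ i, ConvexOn ℝ Set.univ (φ i))
    (φ' : Fin m → (Fin n → ℝ) → (Fin n → ℝ))
    (hφ' : ∀ i x, HasFDerivAt (φ i) (dotCLM (φ' i x)) x)
    (hφ'c : ∀ i, Continuous (φ' i))
    (Q : Matrix (Fin n ⊕ Fin m) (Fin n ⊕ Fin m) ℝ)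
    (wk ws wt : Fin n ⊕ Fin m → ℝ)
    (hws : ws ∈ OmegaSet (m := m) X)
    (hVI : ∀ w ∈ OmegaSet (m := m) X,
      f (xpart w) - f (xpart ws) + (w - ws) ⬝ᵥ Gam φ φ' ws ≥ 0)
    (hwt : wt ∈ OmegaSet (m := m) X)
    (hpred : ∀ w ∈ OmegaSet (m := m) X,
      f (xpart w) - f (xpart wt) + (w - wt) ⬝ᵥ Gam φ φ' wt
        ≥ (w - wt) ⬝ᵥ Q.mulVec (wk - wt)) :
    (wk - ws) ⬝ᵥ Q.mulVec (wk - wt) ≥ (wk - wt) ⬝ᵥ Q.mulVec (wk - wt) := by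
  have h1 := hpred ws hws
  have h2 := hVI wt hwt
  have hmono := Gam_mono φ hφ φ' hφ' ws wt hws.2 hwt.2
  rw [dotProduct_sub] at hmono
  have hneg : (wt - ws) ⬝ᵥ Gam φ φ' ws = -((ws - wt) ⬝ᵥ Gam φ φ' ws) := by
    rw [show wt - ws = -(ws - wt) by ring, neg_dotProduct]
  rw [hneg] at h2
  have hA : (ws - wt) ⬝ᵥ Q.mulVec (wk - wt) ≤ 0 := by linarith
  have hsplit : (wk - ws) ⬝ᵥ Q.mulVec (wk - wt)
      = (wk - wt) ⬝ᵥ Q.mulVec (wk - wt) - (ws - wt) ⬝ᵥ Q.mulVec (wk - wt) := by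
    rw [← sub_dotProduct]; congr 1; ring
  rw [hsplit]; linarith
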